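/- arXiv:2404.10148 — 3 statements merged into one kernel-verified Lean document; each statement's English description precedes it below -/
import Mathlib

section
/- Let A ∈ (ℤ≥0)^{n×n} be an adjacency matrix with degrees d_u := Σ_w A_{uw} and 2-hop connectivities n_{uv} := Σ_w A_{uw} A_{vw}, and let γ := max_{u,v} n_{uv}/d_v (taken over vertices with d_v > 0). Fix real c > 0 and integer q ≥ 1. If a vertex v satisfies d_v ≤ c (with d_v > 0) and a vertex u satisfies d_u ≥ γ² c q, then n_{uv}/(d_u d_v) ≤ sqrt( (1/q) · [ n_{uu} n_{vv}/(d_u² d_v²) + (n_{uv}/(d_u d_v))² ] ). -/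
/-- For a low-degree vertex `v` (`d_v ≤ c`) and a high-degree vertex `u`
(`d_u ≥ γ² c q`), the mean `n_{uv}/(d_u d_v)` is dominated by the standard deviation
`√((1/q)·(n_{uu}n_{vv}/(d_u²d_v²) + (n_{uv}/(d_u d_v))²))`, where
`γ` is the maximum of `n_{uv}/d_v` over pairs with `d_v > 0`. -/
theorem stmt1 (n q : ℕ) (hq : 1 ≤ q) (A : Fin n → Fin n → ℕ)
    (d : Fin n → ℕ) (hd : ∀ u, d u = ∑ w, A u w)
    (N : Fin n → Fin n → ℕ) (hN : ∀ u v, N u v = ∑ w, A u w * A v w)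
    (γ c : ℝ) (hc : 0 < c)
    (hγ : IsGreatest {r : ℝ | ∃ u v : Fin n, 0 < d v ∧ r = (N u v : ℝ) / (d v : ℝ)} γ)
    (u v : Fin n) (hv : 0 < d v) (hvc : (d v : ℝ) ≤ c)
    (hu : γ ^ 2 * c * (q : ℝ) ≤ (d u : ℝ)) :
    (N u v : ℝ) / ((d u : ℝ) * (d v : ℝ)) ≤
      Real.sqrt ((1 / (q : ℝ)) *
        ((N u u : ℝ) * (N v v : ℝ) / ((d u : ℝ) ^ 2 * (d v : ℝ) ^ 2) +
          ((N u v : ℝ) / ((d u : ℝ) * (d v : ℝ))) ^ 2)) := by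
  -- d_w ≤ N_w w for every w
  have hdN : ∀ w : Fin n, d w ≤ N w w := by
    intro w
    rw [hd, hN]
    refine Finset.sum_le_sum fun x _ => ?_
    rcases Nat.eq_zero_or_pos (A w x) with h | h
    · simp [h]
    · exact Nat.le_mul_of_pos_right _ h
  have hdvR : (0:ℝ) < (d v : ℝ) := by exact_mod_cast hv
  -- γ ≥ 1
  have hγ1 : (1:ℝ) ≤ γ := by
    have hmem : ((N v v : ℝ) / (d v : ℝ)) ∈
        {r : ℝ | ∃ u v : Fin n, 0 < d v ∧ r = (N u v : ℝ) / (d v : ℝ)} :=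
      ⟨v, v, hv, rfl⟩
    have h1 : (1:ℝ) ≤ (N v v : ℝ) / (d v : ℝ) := by
      rw [le_div_iff₀ hdvR]
      have := hdN v
      have : (d v : ℝ) ≤ (N v v : ℝ) := by exact_mod_cast this
      linarith
    exact h1.trans (hγ.2 hmem)
  -- N u v ≤ γ * d v
  have hNuv : (N u v : ℝ) ≤ γ * (d v : ℝ) := by
    have hmem : ((N u v : ℝ) / (d v : ℝ)) ∈
        {r : ℝ | ∃ u v : Fin n, 0 < d v ∧ r = (N u v : ℝ) / (d v : ℝ)} :=
      ⟨u, v, hv, rfl⟩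
    have := hγ.2 hmem
    rw [div_le_iff₀ hdvR] at this
    linarith
  have hqR : (1:ℝ) ≤ (q:ℝ) := by exact_mod_cast hq
  have hq0 : (0:ℝ) < (q:ℝ) := by linarith
  have hγ2 : (1:ℝ) ≤ γ ^ 2 := by nlinarith
  have hduR : (0:ℝ) < (d u : ℝ) := by
    nlinarith [mul_nonneg (by nlinarith : (0:ℝ) ≤ γ ^ 2 - 1) hc.le,
      mul_nonneg (mul_nonneg (by nlinarith : (0:ℝ) ≤ γ ^ 2) hc.le)
        (by linarith : (0:ℝ) ≤ (q:ℝ) - 1)]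
  have hduN : (d u : ℝ) ≤ (N u u : ℝ) := by exact_mod_cast hdN u
  have hdvN : (d v : ℝ) ≤ (N v v : ℝ) := by exact_mod_cast hdN v
  have hNuv0 : (0:ℝ) ≤ (N u v : ℝ) := Nat.cast_nonneg _
  -- key: q * (N u v)^2 ≤ N u u * N v v
  have hkey : (q:ℝ) * (N u v : ℝ) ^ 2 ≤ (N u u : ℝ) * (N v v : ℝ) := by
    have h1 : (q:ℝ) * (N u v : ℝ) ^ 2 ≤ (q:ℝ) * (γ * (d v : ℝ)) ^ 2 := by
      nlinarith [mul_self_le_mul_self hNuv0 hNuv]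
    have h2 : (q:ℝ) * (γ * (d v : ℝ)) ^ 2 ≤ (d u : ℝ) * (d v : ℝ) := by
      nlinarith [mul_le_mul_of_nonneg_left hvc
          (mul_nonneg (mul_nonneg (by nlinarith : (0:ℝ) ≤ γ ^ 2) hq0.le) hdvR.le),
        mul_le_mul_of_nonneg_right hu hdvR.le]
    have h3 : (d u : ℝ) * (d v : ℝ) ≤ (N u u : ℝ) * (N v v : ℝ) :=
      mul_le_mul hduN hdvN hdvR.le (hduR.le.trans hduN)
    linarith
  have hx0 : (0:ℝ) ≤ (N u v : ℝ) / ((d u : ℝ) * (d v : ℝ)) := by positivity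
  have hD : (0:ℝ) < (d u : ℝ) ^ 2 * (d v : ℝ) ^ 2 := by positivity
  rw [Real.le_sqrt hx0]
  rw [div_pow, mul_pow, one_div, inv_mul_eq_div, le_div_iff₀ hq0, ← add_div,
    div_mul_eq_mul_div, div_le_div_iff_of_pos_right hD]
  nlinarith [sq_nonneg ((N u v : ℝ))]
  positivity
end

section
/- Let x, y be vectors in ℝⁿ with x·y = 0 and ‖x‖·‖y‖ ≠ 0, and let R be a q×n random matrix with i.i.d. N(0,1/q) entries. Then ℙ( (Rx)·(Ry) < 0 ) = ℙ( (Rx)·(Ry) > 0 ) = 1/2. -/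
open MeasureTheory ProbabilityTheory
open scoped NNReal ENNReal

/-- dot product of two vectors in `ℝ^m`. -/
noncomputable def dotp {m : ℕ} (a b : Fin m → ℝ) : ℝ := ∑ i, a i * b i

/-- Euclidean norm of a vector in `ℝ^m`. -/
noncomputable def vnorm {m : ℕ} (a : Fin m → ℝ) : ℝ := Real.sqrt (dotp a a)

/-- the vector `x Rᵀ ∈ ℝ^q`, for `R` a `q × n` matrix and `x ∈ ℝⁿ`. -/
noncomputable def rpApply {q n : ℕ} (R : Fin q → Fin n → ℝ) (x : Fin n → ℝ) : Fin q → ℝ :=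
  fun i => ∑ j, R i j * x j

/-- the law of a `q × n` random matrix with i.i.d. real Gaussian `N(0, v)` entries. -/
noncomputable def gaussMatrix (q n : ℕ) (v : ℝ≥0) : Measure (Fin q → Fin n → ℝ) :=
  Measure.pi fun _ => Measure.pi fun _ => gaussianReal 0 v

/-! ### Auxiliary lemmas -/

section Aux

open Measure in
/-- Fubini for a product of functions of the coordinates, `Fin` version, for `volume` on `ℝ`. -/
lemma aux_lintegral_fin_prod : ∀ {m : ℕ} (h : Fin m → ℝ → ℝ≥0∞), (∀ j, Measurable (h j)) →
    ∫⁻ r, ∏ j, h j (r j) ∂(Measure.pi fun _ : Fin m => (volume : Measure ℝ)) =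
      ∏ j, ∫⁻ t, h j t := by
  intro m
  induction m with
  | zero =>
    intro h _
    simp only [Finset.univ_eq_empty, Finset.prod_empty, lintegral_const, one_mul]
    rw [Measure.pi_univ]
    simp
  | succ m ih =>
    intro h hmeas
    have hmp := (measurePreserving_piFinSuccAbove (fun _ : Fin (m + 1) => (volume : Measure ℝ)) 0)
    have hsymm := MeasurePreserving.symm _ hmp
    rw [← hsymm.lintegral_comp_emb (MeasurableEquiv.measurableEmbedding _)]
    have heval : ∀ w : ℝ × (Fin m → ℝ),
        (∏ j, h j (((MeasurableEquiv.piFinSuccAbove (fun _ : Fin (m+1) => ℝ) 0).symm w) j)) =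
          h 0 w.1 * ∏ j : Fin m, h j.succ (w.2 j) := by
      intro w
      simp only [MeasurableEquiv.piFinSuccAbove_symm_apply, Fin.insertNthEquiv,
        Equiv.coe_fn_mk, Fin.insertNth_zero]
      rw [Fin.prod_univ_succ]
      simp [Fin.cons_zero, Fin.cons_succ]
    simp only [heval]
    rw [lintegral_prod_mul (f := h 0) (g := fun w : Fin m → ℝ => ∏ j, h j.succ (w j))
      ((hmeas 0).aemeasurable)
      ((show Measurable (fun w : Fin m → ℝ => ∏ j : Fin m, h j.succ (w j)) from
        Finset.measurable_prod Finset.univ fun (j : Fin m) _ =>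
          (hmeas j.succ).comp (measurable_pi_apply j)).aemeasurable)]
    rw [ih (fun j => h j.succ) (fun j => hmeas j.succ), Fin.prod_univ_succ]

/-- The product of iid real Gaussians is Lebesgue measure with the product density. -/
lemma aux_pi_gauss (m : ℕ) {v : ℝ≥0} (hv : v ≠ 0) :
    (Measure.pi fun _ : Fin m => gaussianReal 0 v) =
      (volume : Measure (Fin m → ℝ)).withDensity
        (fun r => ∏ j, gaussianPDF 0 v (r j)) := by
  refine Measure.pi_eq fun s hs => ?_
  have hG : MeasurableSet (Set.pi Set.univ s) := MeasurableSet.univ_pi hs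
  rw [withDensity_apply _ hG, ← lintegral_indicator hG]
  have hind : ∀ r : Fin m → ℝ,
      (Set.pi Set.univ s).indicator (fun r => ∏ j, gaussianPDF 0 v (r j)) r =
        ∏ j, ((s j).indicator (gaussianPDF 0 v)) (r j) := by
    intro r
    by_cases hr : r ∈ Set.pi Set.univ s
    · rw [Set.indicator_of_mem hr]
      exact Finset.prod_congr rfl fun j _ =>
        (Set.indicator_of_mem (hr j (Set.mem_univ j)) _).symm
    · rw [Set.indicator_of_notMem hr]
      have hex : ∃ j, r j ∉ s j := by
        by_contra hcon
        push_neg at hcon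
        exact hr (Set.mem_univ_pi.mpr hcon)
      obtain ⟨j, hj⟩ := hex
      exact (Finset.prod_eq_zero (Finset.mem_univ j) (Set.indicator_of_notMem hj _)).symm
  simp only [hind]
  rw [volume_pi]
  rw [aux_lintegral_fin_prod _ (fun j => (measurable_gaussianPDF 0 v).indicator (hs j))]
  refine Finset.prod_congr rfl fun j _ => ?_
  rw [lintegral_indicator (hs j), ← withDensity_apply _ (hs j),
    ← gaussianReal_of_var_ne_zero 0 hv]

/-- Mapping a `withDensity` measure through a measurable equivalence. -/
lemma aux_map_withDensity {P : Type*} [MeasurableSpace P] (e : P ≃ᵐ P) (ρ : Measure P)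
    {G : P → ℝ≥0∞} (hG : Measurable G) :
    (ρ.withDensity G).map e = (ρ.map e).withDensity (fun a => G (e.symm a)) := by
  ext s hs
  rw [Measure.map_apply e.measurable hs, withDensity_apply _ (e.measurable hs),
    withDensity_apply _ hs,
    setLIntegral_map (f := fun a => G (e.symm a)) hs (hG.comp e.symm.measurable) e.measurable]
  simp

/-- A product of coordinatewise measure-preserving maps preserves the product measure. -/
lemma aux_pi_map {ι : Type*} [Fintype ι] {α β : ι → Type*} [∀ i, MeasurableSpace (α i)]
    [∀ i, MeasurableSpace (β i)] (μ : ∀ i, Measure (α i)) [∀ i, IsProbabilityMeasure (μ i)]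
    (ν : ∀ i, Measure (β i)) [∀ i, SigmaFinite (ν i)]
    (f : ∀ i, α i → β i) (hfm : ∀ i, Measurable (f i)) (hf : ∀ i, (μ i).map (f i) = ν i) :
    (Measure.pi μ).map (fun a i => f i (a i)) = Measure.pi ν := by
  refine (Measure.pi_eq (μ := ν) fun s hs => ?_).symm
  have hmeas : Measurable (fun (a : ∀ i, α i) (i : ι) => f i (a i)) :=
    measurable_pi_lambda _ fun i => (hfm i).comp (measurable_pi_apply i)
  rw [Measure.map_apply hmeas (MeasurableSet.univ_pi hs)]
  have hpre : (fun (a : ∀ i, α i) (i : ι) => f i (a i)) ⁻¹' Set.pi Set.univ s =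
      Set.pi Set.univ (fun i => f i ⁻¹' s i) := by
    ext a; simp [Set.mem_pi]
  rw [hpre, Measure.pi_pi]
  exact Finset.prod_congr rfl fun i _ => by
    rw [← hf i, Measure.map_apply (hfm i) (hs i)]

/-- The joint law of two distinct coordinates of an iid product. -/
lemma aux_pair {k : ℕ} (μ1 : Measure ℝ) [IsProbabilityMeasure μ1] {j0 j1 : Fin k}
    (hne : j0 ≠ j1) :
    (Measure.pi fun _ : Fin k => μ1).map (fun r => (r j0, r j1)) = μ1.prod μ1 := by
  refine (Measure.prod_eq (μ := μ1) (ν := μ1) fun s t hs ht => ?_).symm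
  have hmeas : Measurable (fun r : Fin k → ℝ => (r j0, r j1)) :=
    (measurable_pi_apply j0).prodMk (measurable_pi_apply j1)
  rw [Measure.map_apply hmeas (hs.prod ht)]
  classical
  set s' : Fin k → Set ℝ := fun j => if j = j0 then s else if j = j1 then t else Set.univ with hs'
  have hpre : (fun r : Fin k → ℝ => (r j0, r j1)) ⁻¹' (s ×ˢ t) = Set.pi Set.univ s' := by
    ext r
    simp only [Set.mem_preimage, Set.mem_prod, Set.mem_pi, Set.mem_univ, true_implies, hs']
    constructor
    · rintro ⟨h1, h2⟩ j
      split_ifs with h h'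
      · subst h; exact h1
      · subst h'; exact h2
      · trivial
    · intro h
      constructor
      · have := h j0; simpa using this
      · have := h j1; simp only [if_neg (Ne.symm hne), if_pos rfl] at this; exact this
  rw [hpre, Measure.pi_pi]
  have houter : ∀ j ∈ Finset.univ, j ∉ ({j0, j1} : Finset (Fin k)) → μ1 (s' j) = 1 := by
    intro j _ hj
    simp only [Finset.mem_insert, Finset.mem_singleton, not_or] at hj
    simp [hs', hj.1, hj.2]
  rw [← Finset.prod_subset (Finset.subset_univ ({j0, j1} : Finset (Fin k))) houter]
  rw [Finset.prod_insert (by simpa using hne), Finset.prod_singleton]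
  simp [hs', if_neg (Ne.symm hne)]

lemma aux_gauss_neg {v : ℝ≥0} : (gaussianReal 0 v).map (fun t : ℝ => -t) = gaussianReal 0 v := by
  have hfun : (fun t : ℝ => -t) = (((-1 : ℝ)) * ·) := by funext t; ring
  have h2 : (⟨(-1 : ℝ) ^ 2, sq_nonneg _⟩ : ℝ≥0) = 1 := by ext; norm_num
  rw [hfun, gaussianReal_map_const_mul (-1)]
  congr 1
  · simp
  · ext; simp

lemma aux_mu1_singleton {v : ℝ≥0} (hv : v ≠ 0) (a : ℝ) : gaussianReal 0 v {a} = 0 := by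
  rw [gaussianReal_of_var_ne_zero 0 hv, withDensity_apply _ (measurableSet_singleton a),
    Measure.restrict_eq_zero.mpr (Real.volume_singleton), lintegral_zero_measure]

lemma aux_prod_slice {v : ℝ≥0} (hv : v ≠ 0) (t : ℝ) :
    (gaussianReal 0 v).prod (gaussianReal 0 v) {z : ℝ × ℝ | z.1 * z.2 = t} = 0 := by
  have hS : MeasurableSet {z : ℝ × ℝ | z.1 * z.2 = t} :=
    (measurable_fst.mul measurable_snd) (measurableSet_singleton t)
  rw [Measure.prod_apply hS]
  have hae : ∀ᵐ a ∂(gaussianReal 0 v),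
      gaussianReal 0 v (Prod.mk a ⁻¹' {z : ℝ × ℝ | z.1 * z.2 = t}) = 0 := by
    rw [ae_iff]
    refine measure_mono_null (fun a ha => ?_) (aux_mu1_singleton hv 0)
    simp only [Set.mem_setOf_eq] at ha ⊢
    by_contra ha0
    apply ha
    have hset : Prod.mk a ⁻¹' {z : ℝ × ℝ | z.1 * z.2 = t} = {t / a} := by
      ext b
      simp only [Set.mem_preimage, Set.mem_setOf_eq, Set.mem_singleton_iff]
      rw [eq_div_iff ha0, mul_comm]
    rw [hset]
    exact aux_mu1_singleton hv _
  rw [lintegral_congr_ae hae, lintegral_zero]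

lemma aux_sum_prod_zero {v : ℝ≥0} (hv : v ≠ 0) (m : ℕ) :
    (Measure.pi fun _ : Fin (m + 1) => (gaussianReal 0 v).prod (gaussianReal 0 v))
      {p | (∑ i, (p i).1 * (p i).2) = 0} = 0 := by
  set γ : Measure (ℝ × ℝ) := (gaussianReal 0 v).prod (gaussianReal 0 v) with hγ
  have hmp := measurePreserving_piFinSuccAbove (fun _ : Fin (m + 1) => γ) 0
  set e := MeasurableEquiv.piFinSuccAbove (fun _ : Fin (m + 1) => ℝ × ℝ) 0 with he
  set S : Set ((ℝ × ℝ) × (Fin m → ℝ × ℝ)) :=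
    {w | w.1.1 * w.1.2 + ∑ j, (w.2 j).1 * (w.2 j).2 = 0} with hSdef
  have hSmeas : MeasurableSet S := by
    have : Measurable fun w : (ℝ × ℝ) × (Fin m → ℝ × ℝ) =>
        w.1.1 * w.1.2 + ∑ j, (w.2 j).1 * (w.2 j).2 := by
      refine (measurable_fst.fst.mul measurable_fst.snd).add ?_
      refine Finset.measurable_sum _ fun j _ => ?_
      exact (measurable_fst.comp ((measurable_pi_apply j).comp measurable_snd)).mul
        (measurable_snd.comp ((measurable_pi_apply j).comp measurable_snd))
    exact this (measurableSet_singleton 0)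
  have hset : {p : Fin (m + 1) → ℝ × ℝ | (∑ i, (p i).1 * (p i).2) = 0} = e ⁻¹' S := by
    ext p
    simp only [Set.mem_setOf_eq, Set.mem_preimage, hSdef, he,
      MeasurableEquiv.piFinSuccAbove_apply]
    rw [Fin.sum_univ_succ]
    simp [Fin.removeNth, Fin.zero_succAbove, Fin.tail]
  rw [hset, hmp.measure_preimage hSmeas.nullMeasurableSet]
  rw [Measure.prod_apply_symm hSmeas]
  have hslice : ∀ r : Fin m → ℝ × ℝ,
      γ ((fun z : ℝ × ℝ => (z, r)) ⁻¹' S) = 0 := by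
    intro r
    have : (fun z : ℝ × ℝ => (z, r)) ⁻¹' S =
        {z : ℝ × ℝ | z.1 * z.2 = -(∑ j, (r j).1 * (r j).2)} := by
      ext z
      simp only [Set.mem_preimage, hSdef, Set.mem_setOf_eq]
      constructor <;> intro h <;> linarith
    rw [this, hγ]
    exact aux_prod_slice hv _
  simp only [hslice]
  rw [lintegral_zero]

end Aux

section Rot

variable {n : ℕ}

local notation "E" n => EuclideanSpace ℝ (Fin n)

/-- The product of iid centered Gaussians is invariant under linear isometries. -/
lemma aux_rot {v : ℝ≥0} (hv : v ≠ 0)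
    (f : EuclideanSpace ℝ (Fin n) ≃ₗᵢ[ℝ] EuclideanSpace ℝ (Fin n)) :
    (Measure.pi fun _ : Fin n => gaussianReal 0 v).map
      (fun r : Fin n → ℝ => (MeasurableEquiv.toLp 2 (Fin n → ℝ)).symm
        (f ((MeasurableEquiv.toLp 2 (Fin n → ℝ)).symm.symm r))) =
      Measure.pi fun _ : Fin n => gaussianReal 0 v := by
  classical
  set mE := (MeasurableEquiv.toLp 2 (Fin n → ℝ)).symm with hmE
  set eqv : (Fin n → ℝ) ≃ᵐ (Fin n → ℝ) :=
    (mE.symm.trans f.toHomeomorph.toMeasurableEquiv).trans mE with heqv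
  have hcoe : (fun r : Fin n → ℝ => mE (f (mE.symm r))) = ⇑eqv := rfl
  have hG : Measurable (fun r : Fin n → ℝ => ∏ j, gaussianPDF 0 v (r j)) :=
    Finset.measurable_prod _ fun j _ =>
      (measurable_gaussianPDF 0 v).comp (measurable_pi_apply j)
  have hvolmap : (volume : Measure (Fin n → ℝ)).map eqv = volume := by
    have hmp : MeasurePreserving (⇑mE ∘ ⇑f ∘ ⇑mE.symm)
        (volume : Measure (Fin n → ℝ)) (volume : Measure (Fin n → ℝ)) :=
      (EuclideanSpace.volume_preserving_symm_measurableEquiv_toLp (Fin n)).comp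
        (f.measurePreserving.comp
          (EuclideanSpace.volume_preserving_symm_measurableEquiv_toLp (Fin n)).symm)
    exact hmp.map_eq
  have hdens : (fun a : Fin n → ℝ => ∏ j, gaussianPDF 0 v ((eqv.symm a) j)) =
      fun a : Fin n → ℝ => ∏ j, gaussianPDF 0 v (a j) := by
    funext a
    have hkey : (∑ j, (eqv.symm a) j ^ 2) = ∑ j, (a j) ^ 2 := by
      have hnorm : ‖f.symm (mE.symm a)‖ = ‖mE.symm a‖ := f.symm.norm_map _
      rw [EuclideanSpace.norm_eq, EuclideanSpace.norm_eq] at hnorm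
      have h1 : ∀ w : EuclideanSpace ℝ (Fin n), (∑ j, ‖w j‖ ^ 2) = ∑ j, (w j) ^ 2 := by
        intro w; exact Finset.sum_congr rfl fun j _ => by rw [Real.norm_eq_abs, sq_abs]
      rw [h1, h1] at hnorm
      have hs := (Real.sqrt_inj (Finset.sum_nonneg fun j _ => sq_nonneg _)
        (Finset.sum_nonneg fun j _ => sq_nonneg _)).mp hnorm
      exact hs
    have hprodfun : ∀ w : Fin n → ℝ, (∏ j, gaussianPDFReal 0 v (w j)) =
        (Real.sqrt (2 * Real.pi * v))⁻¹ ^ n * Real.exp (-(∑ j, (w j) ^ 2) / (2 * v)) := by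
      intro w
      simp only [gaussianPDFReal, sub_zero]
      rw [Finset.prod_mul_distrib, Finset.prod_const, Finset.card_univ, Fintype.card_fin,
        ← Real.exp_sum]
      congr 1
      rw [← Finset.sum_div, ← Finset.sum_neg_distrib]
    have hofreal : ∀ w : Fin n → ℝ, (∏ j, gaussianPDF 0 v (w j)) =
        ENNReal.ofReal (∏ j, gaussianPDFReal 0 v (w j)) := by
      intro w
      rw [ENNReal.ofReal_prod_of_nonneg fun j _ => gaussianPDFReal_nonneg 0 v (w j)]
      rfl
    rw [hofreal, hofreal, hprodfun, hprodfun, hkey]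
  rw [aux_pi_gauss n hv, hcoe, aux_map_withDensity eqv _ hG, hvolmap]
  congr 1
  all_goals (funext a; exact congrFun hdens a)

end Rot

set_option maxHeartbeats 1000000 in
/-- For orthogonal `x, y ∈ ℝⁿ` with `‖x‖‖y‖ ≠ 0` and `R` a `q × n`
random matrix with i.i.d. `N(0,1/q)` entries, `(Rx)·(Ry)` is negative with probability
`1/2` and positive with probability `1/2`. -/
theorem stmt10 (n q : ℕ) (hq : 0 < q) (x y : Fin n → ℝ)
    (hxy : dotp x y = 0) (hnorm : vnorm x * vnorm y ≠ 0) :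
    gaussMatrix q n (1 / (q : ℝ≥0)) {R | dotp (rpApply R x) (rpApply R y) < 0} = 1 / 2 ∧
    gaussMatrix q n (1 / (q : ℝ≥0)) {R | dotp (rpApply R x) (rpApply R y) > 0} = 1 / 2 := by
  classical
  obtain ⟨m, rfl⟩ : ∃ m, q = m + 1 := ⟨q - 1, by omega⟩
  set v : ℝ≥0 := 1 / ((m + 1 : ℕ) : ℝ≥0) with hvdef
  have hv : v ≠ 0 := by
    have hq0 : ((m + 1 : ℕ) : ℝ≥0) ≠ 0 := Nat.cast_ne_zero.mpr (Nat.succ_ne_zero m)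
    simp [hvdef, hq0]
  have hxs : vnorm x ≠ 0 := left_ne_zero_of_mul hnorm
  have hys : vnorm y ≠ 0 := right_ne_zero_of_mul hnorm
  have hxpos : 0 < vnorm x := lt_of_le_of_ne (Real.sqrt_nonneg _) (Ne.symm hxs)
  have hypos : 0 < vnorm y := lt_of_le_of_ne (Real.sqrt_nonneg _) (Ne.symm hys)
  have hpos : 0 < vnorm x * vnorm y := mul_pos hxpos hypos
  have hdxx : dotp x x = vnorm x ^ 2 :=
    (Real.sq_sqrt (Finset.sum_nonneg fun j _ => mul_self_nonneg _)).symm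
  have hdyy : dotp y y = vnorm y ^ 2 :=
    (Real.sq_sqrt (Finset.sum_nonneg fun j _ => mul_self_nonneg _)).symm
  set mE := (MeasurableEquiv.toLp 2 (Fin n → ℝ)).symm with hmEdef
  set xE : EuclideanSpace ℝ (Fin n) := mE.symm x with hxEdef
  set yE : EuclideanSpace ℝ (Fin n) := mE.symm y with hyEdef
  have hinner_dot : ∀ wv r : Fin n → ℝ,
      (inner ℝ (mE.symm wv) (mE.symm r) : ℝ) = dotp r wv := by
    intro wv r
    rw [PiLp.inner_apply, dotp]
    refine Finset.sum_congr rfl fun j _ => ?_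
    simp only [RCLike.inner_apply, conj_trivial]
    rfl
  have hixy : (inner ℝ xE yE : ℝ) = 0 := by
    rw [hxEdef, hyEdef, hinner_dot]
    rw [show dotp y x = dotp x y from Finset.sum_congr rfl fun j _ => mul_comm _ _]
    exact hxy
  have hixx : (inner ℝ xE xE : ℝ) = vnorm x ^ 2 := by
    rw [hxEdef, hinner_dot, hdxx]
  have hiyy : (inner ℝ yE yE : ℝ) = vnorm y ^ 2 := by
    rw [hyEdef, hinner_dot, hdyy]
  set x1 : EuclideanSpace ℝ (Fin n) := (vnorm x)⁻¹ • xE with hx1def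
  set y1 : EuclideanSpace ℝ (Fin n) := (vnorm y)⁻¹ • yE with hy1def
  have hi11 : (inner ℝ x1 x1 : ℝ) = 1 := by
    rw [hx1def, real_inner_smul_left, real_inner_smul_right, hixx]
    field_simp
  have hi22 : (inner ℝ y1 y1 : ℝ) = 1 := by
    rw [hy1def, real_inner_smul_left, real_inner_smul_right, hiyy]
    field_simp
  have hi12 : (inner ℝ x1 y1 : ℝ) = 0 := by
    rw [hx1def, hy1def, real_inner_smul_left, real_inner_smul_right, hixy]
    ring
  have hi21 : (inner ℝ y1 x1 : ℝ) = 0 := by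
    rw [real_inner_comm]; exact hi12
  -- n ≥ 2
  have hn2 : 2 ≤ n := by
    have horth2 : Orthonormal ℝ (![x1, y1]) := by
      rw [orthonormal_iff_ite]
      intro i j
      fin_cases i <;> fin_cases j <;>
        simp [hi11, hi22, hi12, hi21,
          (by rw [norm_eq_sqrt_real_inner, hi11, Real.sqrt_one] : ‖x1‖ = 1),
          (by rw [norm_eq_sqrt_real_inner, hi22, Real.sqrt_one] : ‖y1‖ = 1)]
    have hcard := horth2.linearIndependent.fintype_card_le_finrank
    simpa [finrank_euclideanSpace] using hcard
  have hn0 : 0 < n := by omega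
  have hn1 : 1 < n := by omega
  set j0 : Fin n := ⟨0, hn0⟩ with hj0def
  set j1 : Fin n := ⟨1, hn1⟩ with hj1def
  have hne : j0 ≠ j1 := by
    intro h
    have := congrArg Fin.val h
    simp [hj0def, hj1def] at this
  set w : Fin n → EuclideanSpace ℝ (Fin n) :=
    fun j => if j = j0 then x1 else if j = j1 then y1 else 0 with hwdef
  have hwj0 : w j0 = x1 := by simp [hwdef]
  have hwj1 : w j1 = y1 := by simp [hwdef, Ne.symm hne]
  have horth : Orthonormal ℝ (Set.restrict ({j0, j1} : Set (Fin n)) w) := by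
    rw [orthonormal_iff_ite]
    rintro ⟨i, hi⟩ ⟨k, hk⟩
    have hi' : i = j0 ∨ i = j1 := by simpa using hi
    have hk' : k = j0 ∨ k = j1 := by simpa using hk
    rcases hi' with rfl | rfl <;> rcases hk' with rfl | rfl <;>
      simp [Set.restrict, hwj0, hwj1, hi11, hi22, hi12, hi21, Subtype.mk_eq_mk, hne, Ne.symm hne,
        (by rw [norm_eq_sqrt_real_inner, hi11, Real.sqrt_one] : ‖x1‖ = 1),
        (by rw [norm_eq_sqrt_real_inner, hi22, Real.sqrt_one] : ‖y1‖ = 1)]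
  obtain ⟨b, hb⟩ := horth.exists_orthonormalBasis_extension_of_card_eq
    (by simp [finrank_euclideanSpace])
  have hb0 : b j0 = x1 := by rw [hb j0 (by simp), hwj0]
  have hb1 : b j1 = y1 := by rw [hb j1 (by simp), hwj1]
  -- the transformed coordinates
  set c : (Fin n → ℝ) → (Fin n → ℝ) :=
    fun r => mE (b.repr (mE.symm r)) with hcdef
  have hcm : Measurable c := by
    exact mE.measurable.comp (b.repr.continuous.measurable.comp mE.symm.measurable)
  set ν : Measure (Fin n → ℝ) := Measure.pi fun _ : Fin n => gaussianReal 0 v with hνdef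
  have hc : ν.map c = ν := aux_rot hv b.repr
  -- key coordinate identities
  have hkx : ∀ r : Fin n → ℝ, dotp r x = vnorm x * c r j0 := by
    intro r
    have h1 : c r j0 = b.repr (mE.symm r) j0 := rfl
    rw [h1, OrthonormalBasis.repr_apply_apply, hb0, hx1def, real_inner_smul_left,
      hxEdef, hinner_dot, ← mul_assoc, mul_inv_cancel₀ hxs, one_mul]
  have hky : ∀ r : Fin n → ℝ, dotp r y = vnorm y * c r j1 := by
    intro r
    have h1 : c r j1 = b.repr (mE.symm r) j1 := rfl
    rw [h1, OrthonormalBasis.repr_apply_apply, hb1, hy1def, real_inner_smul_left,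
      hyEdef, hinner_dot, ← mul_assoc, mul_inv_cancel₀ hys, one_mul]
  -- pushforward to pairs
  set γ : Measure (ℝ × ℝ) := (gaussianReal 0 v).prod (gaussianReal 0 v) with hγdef
  set θ : (Fin n → ℝ) → ℝ × ℝ := fun r => (c r j0, c r j1) with hθdef
  have hpairm : Measurable (fun r : Fin n → ℝ => (r j0, r j1)) :=
    (measurable_pi_apply j0).prodMk (measurable_pi_apply j1)
  have hθm : Measurable θ := by
    exact hpairm.comp hcm
  have hθlaw : ν.map θ = γ := by
    have hcomp : θ = (fun r : Fin n → ℝ => (r j0, r j1)) ∘ c := rfl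
    rw [hcomp, ← Measure.map_map hpairm hcm, hc, hγdef, hνdef,
      aux_pair (gaussianReal 0 v) hne]
  set Θ : (Fin (m + 1) → Fin n → ℝ) → (Fin (m + 1) → ℝ × ℝ) := fun R i => θ (R i) with hΘdef
  have hΘm : Measurable Θ :=
    measurable_pi_lambda _ fun i => hθm.comp (measurable_pi_apply i)
  set μM : Measure (Fin (m + 1) → Fin n → ℝ) := Measure.pi fun _ : Fin (m + 1) => ν with hμMdef
  set κ : Measure (Fin (m + 1) → ℝ × ℝ) := Measure.pi fun _ : Fin (m + 1) => γ with hκdef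
  have hΘlaw : μM.map Θ = κ :=
    aux_pi_map (fun _ : Fin (m + 1) => ν) (fun _ => γ) (fun _ => θ) (fun _ => hθm)
      (fun _ => hθlaw)
  set Wm : (Fin (m + 1) → ℝ × ℝ) → ℝ := fun p => ∑ i, (p i).1 * (p i).2 with hWmdef
  have hWmm : Measurable Wm :=
    Finset.measurable_sum _ fun i _ =>
      (measurable_fst.comp (measurable_pi_apply i)).mul
        (measurable_snd.comp (measurable_pi_apply i))
  have hZ : ∀ R : Fin (m + 1) → Fin n → ℝ,
      dotp (rpApply R x) (rpApply R y) = (vnorm x * vnorm y) * Wm (Θ R) := by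
    intro R
    rw [dotp, hWmdef]
    show (∑ i, rpApply R x i * rpApply R y i) = vnorm x * vnorm y * ∑ i, (c (R i) j0) * (c (R i) j1)
    rw [Finset.mul_sum]
    refine Finset.sum_congr rfl fun i _ => ?_
    have h1 : rpApply R x i = dotp (R i) x := rfl
    have h2 : rpApply R y i = dotp (R i) y := rfl
    rw [h1, h2, hkx (R i), hky (R i)]
    ring
  have hgm : gaussMatrix (m + 1) n v = μM := rfl
  have hiff : ∀ t : ℝ, (vnorm x * vnorm y) * t < 0 ↔ t < 0 := by
    intro t
    constructor
    · intro h
      by_contra h'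
      push_neg at h'
      have h2 := mul_nonneg hpos.le h'
      linarith
    · intro h
      exact mul_neg_of_pos_of_neg hpos h
  have hiff' : ∀ t : ℝ, 0 < (vnorm x * vnorm y) * t ↔ 0 < t := by
    intro t
    constructor
    · intro h
      by_contra h'
      push_neg at h'
      have h2 : (vnorm x * vnorm y) * t ≤ (vnorm x * vnorm y) * 0 :=
        mul_le_mul_of_nonneg_left h' hpos.le
      rw [mul_zero] at h2
      linarith
    · intro h
      exact mul_pos hpos h
  -- event transfer
  have hsetlt : {R | dotp (rpApply R x) (rpApply R y) < 0} = Θ ⁻¹' {p | Wm p < 0} := by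
    ext R
    simp only [Set.mem_setOf_eq, Set.mem_preimage]
    rw [hZ R]
    exact hiff _
  have hsetgt : {R | dotp (rpApply R x) (rpApply R y) > 0} = Θ ⁻¹' {p | 0 < Wm p} := by
    ext R
    simp only [Set.mem_setOf_eq, Set.mem_preimage, gt_iff_lt]
    rw [hZ R]
    exact hiff' _
  have hmlt : MeasurableSet {p : Fin (m + 1) → ℝ × ℝ | Wm p < 0} :=
    measurableSet_lt hWmm measurable_const
  have hmgt : MeasurableSet {p : Fin (m + 1) → ℝ × ℝ | 0 < Wm p} :=
    measurableSet_lt measurable_const hWmm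
  have hlt : gaussMatrix (m + 1) n v {R | dotp (rpApply R x) (rpApply R y) < 0} =
      κ {p | Wm p < 0} := by
    rw [hgm, hsetlt, ← Measure.map_apply hΘm hmlt, hΘlaw]
  have hgt : gaussMatrix (m + 1) n v {R | dotp (rpApply R x) (rpApply R y) > 0} =
      κ {p | 0 < Wm p} := by
    rw [hgm, hsetgt, ← Measure.map_apply hΘm hmgt, hΘlaw]
  -- symmetry
  have hγflip : γ.map (fun z : ℝ × ℝ => (z.1, -z.2)) = γ := by
    have hmap : (fun z : ℝ × ℝ => (z.1, -z.2)) =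
        Prod.map (id : ℝ → ℝ) (fun t : ℝ => -t) := rfl
    rw [hγdef, hmap, ← Measure.map_prod_map _ _ measurable_id measurable_neg,
      Measure.map_id, aux_gauss_neg]
  have hFm : Measurable (fun (p : Fin (m + 1) → ℝ × ℝ) (i : Fin (m + 1)) => ((p i).1, -(p i).2)) :=
    measurable_pi_lambda _ fun i =>
      ((measurable_fst.comp (measurable_pi_apply i)).prodMk
        (measurable_snd.comp (measurable_pi_apply i)).neg)
  have hflip : κ.map (fun (p : Fin (m + 1) → ℝ × ℝ) (i : Fin (m + 1)) => ((p i).1, -(p i).2)) = κ :=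
    aux_pi_map (fun _ : Fin (m + 1) => γ) (fun _ => γ)
      (fun _ => fun z : ℝ × ℝ => (z.1, -z.2))
      (fun _ => measurable_fst.prodMk measurable_snd.neg) (fun _ => hγflip)
  have hsym : κ {p | Wm p < 0} = κ {p | 0 < Wm p} := by
    conv_lhs => rw [← hflip]
    rw [Measure.map_apply hFm hmlt]
    congr 1
    ext p
    simp only [Set.mem_preimage, Set.mem_setOf_eq]
    have hWneg : Wm (fun i => ((p i).1, -(p i).2)) = -Wm p := by
      rw [hWmdef]
      show (∑ i, (p i).1 * -(p i).2) = -∑ i, (p i).1 * (p i).2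
      rw [← Finset.sum_neg_distrib]
      exact Finset.sum_congr rfl fun i _ => by ring
    rw [hWneg]
    constructor <;> intro h <;> linarith
  -- null set
  have hzero : κ {p | Wm p = 0} = 0 := aux_sum_prod_zero hv m
  -- probability bookkeeping
  have hprob : IsProbabilityMeasure κ := by
    rw [hκdef]
    infer_instance
  have htotal : κ {p | Wm p < 0} + κ {p | 0 < Wm p} = 1 := by
    have hdisj : Disjoint {p : Fin (m + 1) → ℝ × ℝ | Wm p < 0} {p | 0 < Wm p} := by
      rw [Set.disjoint_iff]
      rintro p ⟨h1, h2⟩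
      simp only [Set.mem_setOf_eq] at h1 h2
      exact absurd (h1.trans h2) (lt_irrefl _)
    have hu : κ ({p | Wm p < 0} ∪ {p | 0 < Wm p}) =
        κ {p | Wm p < 0} + κ {p | 0 < Wm p} := measure_union hdisj hmgt
    have hcompl : ({p : Fin (m + 1) → ℝ × ℝ | Wm p < 0} ∪ {p | 0 < Wm p})ᶜ =
        {p | Wm p = 0} := by
      ext p
      simp only [Set.mem_compl_iff, Set.mem_union, Set.mem_setOf_eq, not_or, not_lt]
      constructor
      · rintro ⟨h1, h2⟩
        exact le_antisymm h2 h1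
      · intro h
        exact ⟨le_of_eq h.symm, le_of_eq h⟩
    have hall := measure_add_measure_compl (μ := κ) (hmlt.union hmgt)
    rw [hcompl, hzero, add_zero, measure_univ] at hall
    rw [← hu]
    exact hall
  have hhalf : κ {p | Wm p < 0} = 1 / 2 := by
    have h2a : 2 * κ {p | Wm p < 0} = 1 := by
      rw [two_mul]
      nth_rewrite 2 [hsym]
      exact htotal
    calc κ {p | Wm p < 0} = 2⁻¹ * (2 * κ {p | Wm p < 0}) := by
          rw [← mul_assoc, ENNReal.inv_mul_cancel two_ne_zero ENNReal.ofNat_ne_top, one_mul]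
      _ = 2⁻¹ * 1 := by rw [h2a]
      _ = 1 / 2 := by rw [mul_one, one_div]
  refine ⟨?_, ?_⟩
  · rw [hlt, hhalf]
  · rw [hgt, ← hsym, hhalf]
end

section
/- Let M be a standard Gaussian random vector in ℝ^q with q ≥ 2, write M₁ for its first coordinate and M_{2…q} ∈ ℝ^{q−1} for the vector of its remaining coordinates. Then for every ε > 0: ℙ( M₁/‖M_{2…q}‖ > ε ) = ℙ( M₁/‖M_{2…q}‖ < −ε ) ≤ (1+ε²)^{−(q−1)/2}. -/
open MeasureTheory ProbabilityTheory Real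
open scoped NNReal ENNReal

/-- Gaussian lintegral of `exp (-b x²)`. -/
lemma stmt16_gauss_lint (b : ℝ) (hb : 0 ≤ b) :
    ∫⁻ x, ENNReal.ofReal (Real.exp (-b * x ^ 2)) ∂(gaussianReal 0 1)
      = ENNReal.ofReal (Real.sqrt (1 / (1 + 2 * b))) := by
  have hpos : (0:ℝ) < 1 + 2 * b := by linarith
  set vr : ℝ := 1 / (1 + 2 * b) with hvr
  have hvrpos : 0 < vr := by positivity
  set v : ℝ≥0 := ⟨vr, hvrpos.le⟩ with hv
  have hvne : v ≠ 0 := fun h => hvrpos.ne' (congrArg NNReal.toReal h)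
  rw [gaussianReal_of_var_ne_zero 0 one_ne_zero,
    lintegral_withDensity_eq_lintegral_mul _ (measurable_gaussianPDF 0 1)
      (by measurability)]
  have key : ∀ x : ℝ,
      (gaussianPDF 0 1 * fun x => ENNReal.ofReal (Real.exp (-b * x ^ 2))) x
        = ENNReal.ofReal (Real.sqrt vr) * gaussianPDF 0 v x := by
    intro x
    have h2π : (0:ℝ) < 2 * π := by positivity
    simp only [Pi.mul_apply, gaussianPDF]
    rw [← ENNReal.ofReal_mul (gaussianPDFReal_nonneg _ _ _),
        ← ENNReal.ofReal_mul (Real.sqrt_nonneg _)]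
    congr 1
    simp only [gaussianPDFReal_def, NNReal.coe_one, show (v:ℝ) = vr from rfl]
    have hx : -(x - 0) ^ 2 / (2 * vr) = -(x - 0) ^ 2 / (2 * 1) + -b * x ^ 2 := by
      rw [hvr]; field_simp; ring
    have e1 : Real.sqrt (2 * π * vr) = Real.sqrt (2 * π) * Real.sqrt vr :=
      Real.sqrt_mul h2π.le _
    rw [hx, Real.exp_add, e1]
    have hs2 : Real.sqrt vr ≠ 0 := by positivity
    have hs3 : Real.sqrt (2 * π) ≠ 0 := by positivity
    rw [mul_one]
    field_simp
  simp only [key]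
  rw [lintegral_const_mul _ (measurable_gaussianPDF 0 v),
    lintegral_gaussianPDF_eq_one 0 hvne, mul_one]

/-- Gaussian tail bound. -/
lemma stmt16_gauss_tail (a : ℝ) (ha : 0 ≤ a) :
    gaussianReal 0 1 {x : ℝ | a < x} ≤ ENNReal.ofReal (Real.exp (-(a ^ 2) / 2)) := by
  have hset : MeasurableSet {x : ℝ | a < x} := measurableSet_Ioi
  rw [← lintegral_indicator_one hset]
  have step1 : ∫⁻ x, {x : ℝ | a < x}.indicator 1 x ∂(gaussianReal 0 1)
      ≤ ∫⁻ x, ENNReal.ofReal (Real.exp (a * x - a ^ 2)) ∂(gaussianReal 0 1) := by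
    refine lintegral_mono fun x => ?_
    by_cases hx : x ∈ {x : ℝ | a < x}
    · rw [Set.indicator_of_mem hx]
      simp only [Pi.one_apply]
      rw [← ENNReal.ofReal_one]
      refine ENNReal.ofReal_le_ofReal (Real.one_le_exp ?_)
      have hx' : a < x := hx
      nlinarith
    · rw [Set.indicator_of_notMem hx]; exact zero_le'
  refine step1.trans (le_of_eq ?_)
  rw [gaussianReal_of_var_ne_zero 0 one_ne_zero,
    lintegral_withDensity_eq_lintegral_mul _ (measurable_gaussianPDF 0 1)
      (show Measurable fun x : ℝ => ENNReal.ofReal (Real.exp (a * x - a ^ 2)) from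
        ((measurable_id'.const_mul a).sub measurable_const).exp.ennreal_ofReal)]
  have key : ∀ x : ℝ,
      (gaussianPDF 0 1 * fun x => ENNReal.ofReal (Real.exp (a * x - a ^ 2))) x
        = ENNReal.ofReal (Real.exp (-(a ^ 2) / 2)) * gaussianPDF a 1 x := by
    intro x
    simp only [Pi.mul_apply, gaussianPDF]
    rw [← ENNReal.ofReal_mul (gaussianPDFReal_nonneg _ _ _),
        ← ENNReal.ofReal_mul (Real.exp_nonneg _)]
    congr 1
    simp only [gaussianPDFReal_def, NNReal.coe_one]
    have h1 : Real.exp (-(x - 0) ^ 2 / (2 * 1)) * Real.exp (a * x - a ^ 2)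
        = Real.exp (-(a ^ 2) / 2) * Real.exp (-(x - a) ^ 2 / (2 * 1)) := by
      rw [← Real.exp_add, ← Real.exp_add]; congr 1; ring
    calc (Real.sqrt (2 * π * 1))⁻¹ * Real.exp (-(x - 0) ^ 2 / (2 * 1))
          * Real.exp (a * x - a ^ 2)
        = (Real.sqrt (2 * π * 1))⁻¹
          * (Real.exp (-(x - 0) ^ 2 / (2 * 1)) * Real.exp (a * x - a ^ 2)) := by ring
      _ = (Real.sqrt (2 * π * 1))⁻¹
          * (Real.exp (-(a ^ 2) / 2) * Real.exp (-(x - a) ^ 2 / (2 * 1))) := by rw [h1]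
      _ = Real.exp (-(a ^ 2) / 2)
          * ((Real.sqrt (2 * π * 1))⁻¹ * Real.exp (-(x - a) ^ 2 / (2 * 1))) := by ring
  simp only [key]
  rw [lintegral_const_mul _ (measurable_gaussianPDF a 1),
    lintegral_gaussianPDF_eq_one a one_ne_zero, mul_one]

/-- Lintegral of a product of one-coordinate functions over a power measure. -/
lemma stmt16_lintegral_pi_pow {α : Type*} [MeasurableSpace α] (μ : Measure α)
    [SigmaFinite μ] (f : α → ℝ≥0∞) (hf : Measurable f) :
    ∀ n : ℕ, ∫⁻ y, ∏ i, f (y i) ∂(Measure.pi fun _ : Fin n => μ)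
      = (∫⁻ t, f t ∂μ) ^ n := by
  intro n
  induction n with
  | zero =>
    simp only [Finset.univ_eq_empty, Finset.prod_empty, pow_zero, lintegral_one]
    rw [← Set.pi_univ Set.univ, Measure.pi_pi]
    simp
  | succ n ih =>
    have hmp := measurePreserving_piFinSuccAbove (fun _ : Fin (n + 1) => μ) 0
    have hmeas : Measurable fun p : α × (Fin n → α) => f p.1 * ∏ i, f (p.2 i) :=
      (hf.comp measurable_fst).mul
        (Finset.measurable_prod _ fun i _ =>
          hf.comp ((measurable_pi_apply i).comp measurable_snd))
    calc ∫⁻ M, ∏ i, f (M i) ∂(Measure.pi fun _ : Fin (n + 1) => μ)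
        = ∫⁻ M, (fun p : α × (Fin n → α) => f p.1 * ∏ i, f (p.2 i))
            ((MeasurableEquiv.piFinSuccAbove (fun _ : Fin (n + 1) => α) 0) M)
            ∂(Measure.pi fun _ : Fin (n + 1) => μ) := by
          refine lintegral_congr fun M => ?_
          simp [MeasurableEquiv.piFinSuccAbove, Fin.removeNth, Fin.prod_univ_succ,
            Fin.zero_succAbove, Fin.insertNthEquiv, Fin.tail]
      _ = ∫⁻ p, f p.1 * ∏ i, f (p.2 i)
            ∂(μ.prod (Measure.pi fun _ : Fin n => μ)) := hmp.lintegral_comp hmeas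
      _ = (∫⁻ t, f t ∂μ) * ∫⁻ y, ∏ i, f (y i) ∂(Measure.pi fun _ : Fin n => μ) :=
          lintegral_prod_mul hf.aemeasurable
            (Finset.measurable_prod _ fun i _ =>
              hf.comp (measurable_pi_apply i)).aemeasurable
      _ = (∫⁻ t, f t ∂μ) ^ (n + 1) := by rw [ih, pow_succ, mul_comm]

lemma stmt16_gauss_neg :
    (gaussianReal 0 1).map (fun x : ℝ => -x) = gaussianReal 0 1 := by
  have h2 : (fun x : ℝ => -x) = fun x : ℝ => (-1 : ℝ) * x := by funext x; ring
  have e1 : (-1:ℝ) * 0 = 0 := by ring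
  have e2 : (NNReal.mk ((-1:ℝ)^2) (sq_nonneg _)) * 1 = 1 := by ext; norm_num
  rw [h2, gaussianReal_map_const_mul (μ := 0) (v := 1) (-1 : ℝ), e1, e2]

lemma stmt16_pi_neg (n : ℕ) :
    (Measure.pi fun _ : Fin n => gaussianReal 0 1).map (fun M i => -(M i))
      = Measure.pi fun _ : Fin n => gaussianReal 0 1 := by
  have hT : Measurable fun (M : Fin n → ℝ) i => -(M i) :=
    measurable_pi_lambda _ fun i => (measurable_pi_apply i).neg
  refine (Measure.pi_eq (μ := fun _ : Fin n => gaussianReal 0 1) fun s hs => ?_).symm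
  rw [Measure.map_apply hT (MeasurableSet.univ_pi hs)]
  have hpre : (fun (M : Fin n → ℝ) i => -(M i)) ⁻¹' Set.pi Set.univ s
      = Set.pi Set.univ fun i => (fun x : ℝ => -x) ⁻¹' s i := by
    ext M; simp [Set.mem_pi]
  rw [hpre, Measure.pi_pi]
  refine Finset.prod_congr rfl fun i _ => ?_
  conv_rhs => rw [← stmt16_gauss_neg]
  rw [Measure.map_apply measurable_neg (hs i)]

lemma stmt16_sum_filter_ne {n : ℕ} (i0 : Fin (n + 1)) (g : Fin (n + 1) → ℝ) :
    ∑ i ∈ Finset.univ.filter (fun i => i ≠ i0), g i = ∑ j : Fin n, g (i0.succAbove j) := by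
  have h2 : ∑ i ∈ Finset.univ.filter (fun i => i ≠ i0), g i = (∑ i, g i) - g i0 := by
    rw [Finset.filter_ne', Finset.sum_erase_eq_sub (Finset.mem_univ i0)]
  rw [h2, Fin.sum_univ_succAbove g i0]
  ring

lemma stmt16_meas_f {n : ℕ} (i0 : Fin (n + 1)) :
    Measurable fun M : Fin (n + 1) → ℝ =>
      M i0 / Real.sqrt (∑ i ∈ Finset.univ.filter (fun i => i ≠ i0), M i ^ 2) :=
  (measurable_pi_apply i0).div
    (Measurable.sqrt (Finset.measurable_sum _ fun i _ =>
      (measurable_pi_apply i).pow_const 2))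

lemma stmt16_partEq (n : ℕ) (ε : ℝ) (i0 : Fin (n + 1)) :
    (Measure.pi fun _ : Fin (n + 1) => gaussianReal 0 1)
      {M : Fin (n + 1) → ℝ |
        M i0 / Real.sqrt (∑ i ∈ Finset.univ.filter (fun i => i ≠ i0), M i ^ 2) > ε}
    = (Measure.pi fun _ : Fin (n + 1) => gaussianReal 0 1)
      {M : Fin (n + 1) → ℝ |
        M i0 / Real.sqrt (∑ i ∈ Finset.univ.filter (fun i => i ≠ i0), M i ^ 2) < -ε} := by
  have hf := stmt16_meas_f i0
  have hT : Measurable fun (M : Fin (n + 1) → ℝ) i => -(M i) :=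
    measurable_pi_lambda _ fun i => (measurable_pi_apply i).neg
  have hE' : MeasurableSet {M : Fin (n + 1) → ℝ |
      M i0 / Real.sqrt (∑ i ∈ Finset.univ.filter (fun i => i ≠ i0), M i ^ 2) < -ε} :=
    hf measurableSet_Iio
  have hpre : {M : Fin (n + 1) → ℝ |
        M i0 / Real.sqrt (∑ i ∈ Finset.univ.filter (fun i => i ≠ i0), M i ^ 2) > ε}
      = (fun (M : Fin (n + 1) → ℝ) i => -(M i)) ⁻¹'
        {M : Fin (n + 1) → ℝ |
          M i0 / Real.sqrt (∑ i ∈ Finset.univ.filter (fun i => i ≠ i0), M i ^ 2)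
            < -ε} := by
    ext M
    have hSneg : ∑ i ∈ Finset.univ.filter (fun i => i ≠ i0), (-(M i)) ^ 2
        = ∑ i ∈ Finset.univ.filter (fun i => i ≠ i0), M i ^ 2 :=
      Finset.sum_congr rfl fun i _ => by ring
    simp only [Set.mem_preimage, Set.mem_setOf_eq, gt_iff_lt, hSneg, neg_div,
      neg_lt_neg_iff]
  rw [hpre, ← Measure.map_apply hT hE', stmt16_pi_neg (n + 1)]

lemma stmt16_partLe (n : ℕ) (ε : ℝ) (hε : 0 < ε) (i0 : Fin (n + 1)) :
    (Measure.pi fun _ : Fin (n + 1) => gaussianReal 0 1)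
      {M : Fin (n + 1) → ℝ |
        M i0 / Real.sqrt (∑ i ∈ Finset.univ.filter (fun i => i ≠ i0), M i ^ 2) > ε}
    ≤ ENNReal.ofReal (Real.sqrt (1 / (1 + ε ^ 2))) ^ n := by
  set E := {M : Fin (n + 1) → ℝ |
    M i0 / Real.sqrt (∑ i ∈ Finset.univ.filter (fun i => i ≠ i0), M i ^ 2) > ε} with hEdef
  have hE : MeasurableSet E := (stmt16_meas_f i0) measurableSet_Ioi
  set S' : (Fin n → ℝ) → ℝ := fun y => ∑ j, y j ^ 2 with hS'
  have hmp := measurePreserving_piFinSuccAbove (fun _ : Fin (n + 1) => gaussianReal 0 1) i0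
  set e := MeasurableEquiv.piFinSuccAbove (fun _ : Fin (n + 1) => ℝ) i0 with he
  have hEsymm : MeasurableSet (e.symm ⁻¹' E) := hE.preimage e.symm.measurable
  have h1 : (Measure.pi fun _ : Fin (n + 1) => gaussianReal 0 1) E
      = ((gaussianReal 0 1).prod (Measure.pi fun _ : Fin n => gaussianReal 0 1))
          (e.symm ⁻¹' E) := by
    have hEeq : E = e ⁻¹' (e.symm ⁻¹' E) := by
      ext M; simp
    conv_lhs => rw [hEeq]
    exact hmp.measure_preimage hEsymm.nullMeasurableSet
  have h2 : ((gaussianReal 0 1).prod (Measure.pi fun _ : Fin n => gaussianReal 0 1))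
        (e.symm ⁻¹' E)
      = ∫⁻ y, gaussianReal 0 1 {x : ℝ | ε < x / Real.sqrt (S' y)}
          ∂(Measure.pi fun _ : Fin n => gaussianReal 0 1) := by
    rw [Measure.prod_apply_symm hEsymm]
    refine lintegral_congr fun y => ?_
    congr 1
    ext x
    simp only [Set.mem_preimage, hEdef, Set.mem_setOf_eq, gt_iff_lt]
    have hval : e.symm (x, y) i0 = x := by
      simp [he, MeasurableEquiv.piFinSuccAbove, Fin.insertNthEquiv]
    have hsum : ∑ i ∈ Finset.univ.filter (fun i => i ≠ i0), (e.symm (x, y) i) ^ 2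
        = S' y := by
      rw [stmt16_sum_filter_ne i0]
      refine Finset.sum_congr rfl fun j _ => ?_
      congr 1
      simp [he, MeasurableEquiv.piFinSuccAbove, Fin.insertNthEquiv]
    rw [hval, hsum]
  have h3 : ∀ y : Fin n → ℝ,
      gaussianReal 0 1 {x : ℝ | ε < x / Real.sqrt (S' y)}
        ≤ ENNReal.ofReal (Real.exp (-(ε ^ 2 * S' y) / 2)) := by
    intro y
    have hS'0 : 0 ≤ S' y := Finset.sum_nonneg fun j _ => sq_nonneg _
    rcases eq_or_lt_of_le (Real.sqrt_nonneg (S' y)) with hs0 | hs0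
    · have hempty : {x : ℝ | ε < x / Real.sqrt (S' y)} = ∅ := by
        ext x
        simp only [Set.mem_setOf_eq, ← hs0, div_zero, Set.mem_empty_iff_false, iff_false,
          not_lt]
        linarith
      rw [hempty]
      simp
    · have h4 : {x : ℝ | ε < x / Real.sqrt (S' y)}
          = {x : ℝ | ε * Real.sqrt (S' y) < x} := by
        ext x
        rw [Set.mem_setOf_eq, Set.mem_setOf_eq, lt_div_iff₀ hs0]
      rw [h4]
      refine (stmt16_gauss_tail (ε * Real.sqrt (S' y)) (by positivity)).trans
        (le_of_eq ?_)
      congr 2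
      rw [mul_pow, Real.sq_sqrt hS'0]
  have h5 : ∫⁻ y, ENNReal.ofReal (Real.exp (-(ε ^ 2 * S' y) / 2))
        ∂(Measure.pi fun _ : Fin n => gaussianReal 0 1)
      = (∫⁻ t, ENNReal.ofReal (Real.exp (-(ε ^ 2 / 2) * t ^ 2)) ∂(gaussianReal 0 1))
          ^ n := by
    rw [← stmt16_lintegral_pi_pow (gaussianReal 0 1)
      (fun t => ENNReal.ofReal (Real.exp (-(ε ^ 2 / 2) * t ^ 2)))
      (by measurability) n]
    refine lintegral_congr fun y => ?_
    rw [← ENNReal.ofReal_prod_of_nonneg (fun i _ => Real.exp_nonneg _)]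
    congr 1
    rw [← Real.exp_sum]
    congr 1
    have hval : -(ε ^ 2 * S' y) / 2 = (-(ε ^ 2 / 2)) * S' y := by ring
    rw [hval]
    simp only [hS']
    rw [Finset.mul_sum]
  calc (Measure.pi fun _ : Fin (n + 1) => gaussianReal 0 1) E
      = ∫⁻ y, gaussianReal 0 1 {x : ℝ | ε < x / Real.sqrt (S' y)}
          ∂(Measure.pi fun _ : Fin n => gaussianReal 0 1) := by rw [h1, h2]
    _ ≤ ∫⁻ y, ENNReal.ofReal (Real.exp (-(ε ^ 2 * S' y) / 2))
          ∂(Measure.pi fun _ : Fin n => gaussianReal 0 1) :=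
        lintegral_mono fun y => h3 y
    _ = (∫⁻ t, ENNReal.ofReal (Real.exp (-(ε ^ 2 / 2) * t ^ 2)) ∂(gaussianReal 0 1))
          ^ n := h5
    _ = ENNReal.ofReal (Real.sqrt (1 / (1 + ε ^ 2))) ^ n := by
        rw [stmt16_gauss_lint (ε ^ 2 / 2) (by positivity),
          show (1:ℝ) + 2 * (ε ^ 2 / 2) = 1 + ε ^ 2 by ring]

/-- For a standard Gaussian vector `M` in `ℝ^q` (`q ≥ 2`) with first
coordinate `M₁` and remaining coordinates `M_{2…q}`, and every `ε > 0`: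
`ℙ(M₁/‖M_{2…q}‖ > ε) = ℙ(M₁/‖M_{2…q}‖ < −ε) ≤ (1+ε²)^{−(q−1)/2}`. -/
theorem stmt16 (q : ℕ) (hq : 2 ≤ q) (ε : ℝ) (hε : 0 < ε) :
    (Measure.pi fun _ : Fin q => gaussianReal 0 1)
        {M : Fin q → ℝ |
          M ⟨0, by omega⟩ /
              Real.sqrt (∑ i ∈ Finset.univ.filter fun i : Fin q => i ≠ ⟨0, by omega⟩,
                M i ^ 2) > ε} =
      (Measure.pi fun _ : Fin q => gaussianReal 0 1)
        {M : Fin q → ℝ |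
          M ⟨0, by omega⟩ /
              Real.sqrt (∑ i ∈ Finset.univ.filter fun i : Fin q => i ≠ ⟨0, by omega⟩,
                M i ^ 2) < -ε} ∧
    (Measure.pi fun _ : Fin q => gaussianReal 0 1)
        {M : Fin q → ℝ |
          M ⟨0, by omega⟩ /
              Real.sqrt (∑ i ∈ Finset.univ.filter fun i : Fin q => i ≠ ⟨0, by omega⟩,
                M i ^ 2) > ε} ≤
      ENNReal.ofReal ((1 + ε ^ 2) ^ (-(((q : ℝ) - 1) / 2))) := by
  obtain ⟨n, rfl⟩ : ∃ n, q = n + 1 := ⟨q - 1, by omega⟩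
  constructor
  · exact stmt16_partEq n ε ⟨0, by omega⟩
  · refine (stmt16_partLe n ε hε ⟨0, by omega⟩).trans (le_of_eq ?_)
    rw [← ENNReal.ofReal_pow (Real.sqrt_nonneg _)]
    congr 1
    have ha : (0:ℝ) < 1 + ε ^ 2 := by positivity
    rw [Real.sqrt_eq_rpow, ← Real.rpow_natCast ((1 / (1 + ε ^ 2)) ^ ((1:ℝ) / 2)) n,
      ← Real.rpow_mul (by positivity), one_div, Real.inv_rpow ha.le,
      ← Real.rpow_neg ha.le]
    congr 1
    push_cast
    ring
end
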